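/- arXiv:2309.05616 — 2 statements merged into one kernel-verified Lean document; each statement's English description precedes it below -/
import Mathlib

section
/- For every real ν and every real q with q ≠ 0, setting λ = −1/2 + iν (so that Γ(1+λ−iq)·Γ(−λ−iq) = G(q,ν) and Γ(1+λ+iq)·Γ(−λ+iq) = G(−q,ν)), the following identity holds: π/(Γ(1−iq)·Γ(1+iq)) + sin²(πλ)·Γ(iq)·Γ(−iq)/π + π·Γ(iq)·Γ(−iq)/(G(q,ν)·G(−q,ν)) = (cosh(2πq) + cosh(2πν))/(q·sinh(πq)). -/
/-!
With `z = iq` and `w = iν`, the reflection formula `Γ(s)Γ(1 - s) = π / sin(πs)` turns every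
Gamma product into a trigonometric function: `Γ(z)Γ(-z) = -π / (z sin πz)`,
`Γ(1 - z)Γ(1 + z) = πz / sin πz` and `Γ(1/2 - s)Γ(1/2 + s) = π / cos πs`, while
`sin(π(-1/2 + w)) = -cos πw`. By `cos(a + b)cos(a - b) = cos² a - sin² b` the left side collapses
to `2(sin² πz - cos² πw) / (z sin πz) = -(cos 2πz + cos 2πw) / (z sin πz)`, which at `z = iq`,
`w = iν` is the hyperbolic right side.
-/

open Complex

/-- `G(q,ν) = Γ(1/2 - iν - iq)·Γ(1/2 + iν - iq)`. -/
noncomputable def Gfun (q ν : ℝ) : ℂ :=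
  Complex.Gamma (1 / 2 - Complex.I * ν - Complex.I * q) *
    Complex.Gamma (1 / 2 + Complex.I * ν - Complex.I * q)

open scoped Real

namespace Complex

theorem Gamma_mul_Gamma_neg {z : ℂ} (hz : z ≠ 0) :
    Gamma z * Gamma (-z) = -π / (z * sin (π * z)) := by
  have h : Gamma z * Gamma (-z) * z = π / -sin (π * z) := by
    rw [← sin_neg, ← mul_neg, ← Gamma_mul_Gamma_one_sub, sub_neg_eq_add, add_comm,
      Gamma_add_one z hz]
    ring
  rw [eq_div_of_mul_eq hz h]
  ring

theorem Gamma_one_sub_mul_Gamma_one_add {z : ℂ} (hz : z ≠ 0) :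
    Gamma (1 - z) * Gamma (1 + z) = π * z / sin (π * z) := by
  have h₁ : Gamma (1 - z) = -z * Gamma (-z) := by
    rw [← Gamma_add_one _ (neg_ne_zero.mpr hz), neg_add_eq_sub]
  calc Gamma (1 - z) * Gamma (1 + z) = -z ^ 2 * (Gamma z * Gamma (-z)) := by
        rw [h₁, add_comm, Gamma_add_one z hz]; ring
    _ = π * z / sin (π * z) := by rw [Gamma_mul_Gamma_neg hz]; field_simp

theorem Gamma_one_half_sub_mul_Gamma_one_half_add (z : ℂ) :
    Gamma (1 / 2 - z) * Gamma (1 / 2 + z) = π / cos (π * z) := by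
  have h := Gamma_mul_Gamma_one_sub (1 / 2 + z)
  rwa [show (1 : ℂ) - (1 / 2 + z) = 1 / 2 - z by ring, mul_add, mul_one_div,
    add_comm (π / 2 : ℂ), sin_add_pi_div_two, mul_comm] at h

theorem cos_add_mul_cos_sub (x y : ℂ) : cos (x + y) * cos (x - y) = cos x ^ 2 - sin y ^ 2 := by
  rw [cos_add, cos_sub]
  linear_combination cos x ^ 2 * sin_sq_add_cos_sq y - sin y ^ 2 * sin_sq_add_cos_sq x

end Complex

theorem bielski_coefficient {z : ℂ} (w : ℂ) (hs : sin (π * z) ≠ 0) :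
    π / (Gamma (1 - z) * Gamma (1 + z)) + sin (π * (-(1 / 2) + w)) ^ 2 * Gamma z * Gamma (-z) / π
      + π * Gamma z * Gamma (-z) / (Gamma (1 / 2 - w - z) * Gamma (1 / 2 + w - z)
        * (Gamma (1 / 2 - w + z) * Gamma (1 / 2 + w + z)))
      = -(cos (2 * π * z) + cos (2 * π * w)) / (z * sin (π * z)) := by
  have hz : z ≠ 0 := by rintro rfl; simp at hs
  have hpi : (π : ℂ) ≠ 0 := ofReal_ne_zero.mpr Real.pi_ne_zero
  have hG : Gamma (1 / 2 - w - z) * Gamma (1 / 2 + w - z)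
        * (Gamma (1 / 2 - w + z) * Gamma (1 / 2 + w + z))
      = π / cos (π * (w + z)) * (π / cos (π * (w - z))) := by
    rw [← Gamma_one_half_sub_mul_Gamma_one_half_add, ← Gamma_one_half_sub_mul_Gamma_one_half_add]
    ring_nf
  have hsin : sin (π * (-(1 / 2) + w)) = -cos (π * w) := by
    rw [← sin_sub_pi_div_two]; ring_nf
  rw [Gamma_one_sub_mul_Gamma_one_add hz, mul_assoc _ (Gamma z), mul_assoc (π : ℂ) (Gamma z),
    Gamma_mul_Gamma_neg hz, hG, hsin, div_mul_div_comm, div_div_eq_mul_div, mul_add, mul_sub,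
    mul_assoc 2, mul_assoc 2, cos_two_mul, cos_two_mul, cos_add_mul_cos_sub]
  field_simp
  linear_combination (2 : ℂ) * sin_sq_add_cos_sq (π * z)

/-- For real `ν` and real `q ≠ 0`, with conical degree `λ = -1/2 + iν`:
`π/(Γ(1-iq)Γ(1+iq)) + sin²(πλ)Γ(iq)Γ(-iq)/π + πΓ(iq)Γ(-iq)/(G(q,ν)G(-q,ν))
  = (cosh(2πq)+cosh(2πν))/(q·sinh(πq))`. -/
theorem bielski_coefficient_conical (ν q : ℝ) (hq : q ≠ 0) :
    (Real.pi : ℂ) / (Complex.Gamma (1 - Complex.I * q) * Complex.Gamma (1 + Complex.I * q))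
      + Complex.sin ((Real.pi : ℂ) * (-(1 / 2) + Complex.I * ν)) ^ 2
          * Complex.Gamma (Complex.I * q) * Complex.Gamma (-(Complex.I * q)) / (Real.pi : ℂ)
      + (Real.pi : ℂ) * Complex.Gamma (Complex.I * q) * Complex.Gamma (-(Complex.I * q))
          / (Gfun q ν * Gfun (-q) ν)
      = ((Real.cosh (2 * Real.pi * q) : ℂ) + (Real.cosh (2 * Real.pi * ν) : ℂ))
          / ((q : ℂ) * (Real.sinh (Real.pi * q) : ℂ)) := by
  have hsin : sin (π * (I * q)) = Real.sinh (π * q) * I := by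
    rw [← mul_assoc, mul_right_comm, sin_mul_I, ofReal_sinh, ofReal_mul]
  have hsinh : (Real.sinh (π * q) : ℂ) ≠ 0 := by
    exact_mod_cast Real.sinh_ne_zero.mpr (mul_ne_zero Real.pi_ne_zero hq)
  have hcos (x : ℝ) : cos (2 * π * (I * x)) = Real.cosh (2 * π * x) := by
    rw [← mul_assoc, mul_right_comm, cos_mul_I]; push_cast; rfl
  have hden : I * q * (Real.sinh (π * q) * I) = -(q * Real.sinh (π * q)) := by
    linear_combination (q * Real.sinh (π * q) : ℂ) * I_sq
  have h := bielski_coefficient (z := I * q) (I * ν)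
    (by rw [hsin]; exact mul_ne_zero hsinh I_ne_zero)
  rw [hsin, hcos, hcos, hden, neg_div_neg_eq] at h
  rw [← h, Gfun, Gfun]
  push_cast
  ring_nf
end

section
/- For every real ν and every real q with q ≠ 0: (iπ/(2·sinh(πq)))·[(Γ(1/2+iν+iq)/Γ(1/2+iν−iq))·(iπ²·sinh(πν)/(q·sinh(πq)·G(−q,ν))) − cosh(πq)·(iπ·(sinh(2πq)+sinh(2πν))/(2q·sinh(πq)))] = π²·(cosh(2πq)+cosh(2πν))/(4q·sinh(πq)). -/
/-!
By the reflection formula, `Γ(1/2 + it) Γ(1/2 - it) = π / cosh(πt)`. Since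
`G(-q,ν) = Γ(1/2 - iν + iq) Γ(1/2 + iν + iq)`, the Gamma factors of the first term collapse to
`cosh(π(ν - q)) / π`, and what remains is the hyperbolic identity
`cosh a (sinh 2a + sinh 2b) - 2 sinh b cosh(b - a) = sinh a (cosh 2a + cosh 2b)` at
`a = πq`, `b = πν`, together with `i² = -1`.
-/

open Complex

open scoped Real

theorem Complex.Gamma_one_half_add_mul_I_mul_Gamma_one_half_sub_mul_I (t : ℝ) :
    Gamma (1 / 2 + t * I) * Gamma (1 / 2 - t * I) = π / Real.cosh (π * t) := by
  have h := Gamma_mul_Gamma_one_sub (1 / 2 + t * I)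
  rwa [show 1 - (1 / 2 + t * I) = 1 / 2 - t * I by ring,
    show π * (1 / 2 + t * I) = π * t * I + π / 2 by ring, sin_add_pi_div_two, cos_mul_I,
    ← ofReal_mul, ← ofReal_cosh] at h

theorem Gamma_div_Gamma_div_Gfun_neg (ν q : ℝ) :
    Gamma (1 / 2 + I * ν + I * q) / Gamma (1 / 2 + I * ν - I * q) / Gfun (-q) ν
      = Real.cosh (π * ν - π * q) / π := by
  have hG : Gfun (-q) ν = Gamma (1 / 2 - I * ν + I * q) * Gamma (1 / 2 + I * ν + I * q) := by
    simp only [Gfun, ofReal_neg, mul_neg, sub_neg_eq_add]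
  have hrefl := Gamma_one_half_add_mul_I_mul_Gamma_one_half_sub_mul_I (ν - q)
  rw [show ((ν - q : ℝ) : ℂ) * I = I * ν - I * q by push_cast; ring, ← add_sub_assoc,
    ← sub_add, mul_sub] at hrefl
  rw [hG, div_div, ← mul_assoc, hrefl,
    div_mul_cancel_right₀ (Gamma_ne_zero_of_re_pos (by simp)), inv_div]

theorem Real.cosh_mul_sinh_two_mul_add_sub_two_mul_sinh_mul_cosh_sub (a b : ℝ) :
    cosh a * (sinh (2 * a) + sinh (2 * b)) - 2 * sinh b * cosh (b - a)
      = sinh a * (cosh (2 * a) + cosh (2 * b)) := by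
  rw [sinh_two_mul, sinh_two_mul, cosh_two_mul, cosh_two_mul, cosh_sub]
  linear_combination sinh a * cosh_sq_sub_sinh_sq a - sinh a * cosh_sq_sub_sinh_sq b

/-- δ(q−q') coefficient of `I₃` from the two coefficients of `I₂`:
`(iπ/(2 sinh πq))·[(Γ(1/2+iν+iq)/Γ(1/2+iν−iq))·(iπ² sinh πν /(q sinh πq · G(−q,ν)))
  − cosh(πq)·(iπ (sinh 2πq + sinh 2πν)/(2q sinh πq))]
  = π² (cosh 2πq + cosh 2πν)/(4 q sinh πq)`. -/
theorem I3_delta_minus_coefficient (ν q : ℝ) (hq : q ≠ 0) :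
    (Complex.I * (Real.pi : ℂ) / (2 * (Real.sinh (Real.pi * q) : ℂ))) *
      ((Complex.Gamma (1 / 2 + Complex.I * ν + Complex.I * q)
            / Complex.Gamma (1 / 2 + Complex.I * ν - Complex.I * q))
          * (Complex.I * (Real.pi : ℂ) ^ 2 * (Real.sinh (Real.pi * ν) : ℂ)
              / ((q : ℂ) * (Real.sinh (Real.pi * q) : ℂ) * Gfun (-q) ν))
        - (Real.cosh (Real.pi * q) : ℂ)
            * (Complex.I * (Real.pi : ℂ)
                * ((Real.sinh (2 * Real.pi * q) : ℂ) + (Real.sinh (2 * Real.pi * ν) : ℂ))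
                / (2 * (q : ℂ) * (Real.sinh (Real.pi * q) : ℂ))))
      = (Real.pi : ℂ) ^ 2
          * ((Real.cosh (2 * Real.pi * q) : ℂ) + (Real.cosh (2 * Real.pi * ν) : ℂ))
          / (4 * (q : ℂ) * (Real.sinh (Real.pi * q) : ℂ)) := by
  have hπ : (π : ℂ) ≠ 0 := ofReal_ne_zero.mpr Real.pi_ne_zero
  have hq' : (q : ℂ) ≠ 0 := ofReal_ne_zero.mpr hq
  have hS : (Real.sinh (π * q) : ℂ) ≠ 0 :=
    ofReal_ne_zero.mpr (Real.sinh_ne_zero.mpr (mul_ne_zero Real.pi_ne_zero hq))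
  have hident := congrArg ofReal
    (Real.cosh_mul_sinh_two_mul_add_sub_two_mul_sinh_mul_cosh_sub (π * q) (π * ν))
  rw [show ∀ X a b G : ℂ, X * (a / (b * G)) = a / b * (X / G) from fun _ _ _ _ => by ring,
    Gamma_div_Gamma_div_Gfun_neg]
  field_simp
  rw [I_sq]
  push_cast at hident ⊢
  linear_combination (norm := ring_nf) 4 * hident
end
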